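/- arXiv:1010.6105 — 2 statements merged into one kernel-verified Lean document; each statement's English description precedes it below -/
import Mathlib

section
/- Suppose a differentiable function y : [0, ∞) → [0, ∞) satisfies y' + y ≤ F² on each interval [tₙ, t_{n+1}) with tₙ = nh, and at each tₙ the function may jump but satisfies y(tₙ) ≤ lim_{t↗tₙ} y(t) + K for a constant K ≥ 0 (with y(0) ≤ η² + K). Then y(t) ≤ M₁/(1 - e^{-h}) for all t ≥ 0, where M₁ = η² + (Kγ + F²(1-γ)) + K + F² with γ = e^{-h}. -/
/-!
On each interval `[nh, (n+1)h)` the inequality `y' + y ≤ F²` makes `(y - F²) eᵗ` antitone, so `y`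
relaxes towards `F²` at rate `e^{-(t - nh)}`. Hence the node values `uₙ = y(nh)` obey the affine
recursion `uₙ₊₁ ≤ γ uₙ + F²(1 - γ) + K` with `γ = e^{-h} < 1`, which keeps them below
`max (u₀, (F²(1 - γ) + K) / (1 - γ))`; between nodes `y` stays below the larger of `F²` and the
last node value.
-/

open Real Set Filter Topology

section DifferentialInequality

variable {y y' : ℝ → ℝ} {a b c : ℝ}

theorem le_add_sub_mul_exp_of_deriv_add_le
    (hdiff : ∀ t ∈ Ico a b, HasDerivWithinAt y (y' t) (Ico a b) t)
    (hineq : ∀ t ∈ Ico a b, y' t + y t ≤ c) {t : ℝ} (ht : t ∈ Ico a b) :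
    y t ≤ c + (y a - c) * exp (a - t) := by
  have hanti : AntitoneOn (fun s => (y s - c) * exp s) (Ico a b) := by
    refine antitoneOn_of_hasDerivWithinAt_nonpos (f' := fun s => (y' s + (y s - c)) * exp s)
      (convex_Ico a b) ?_ (fun s hs => ?_) (fun s hs => ?_)
    · exact fun s hs => ((hdiff s hs).continuousWithinAt.sub continuousWithinAt_const).mul
        continuous_exp.continuousWithinAt
    · rw [interior_Ico] at hs ⊢
      have hy := ((hdiff s (Ioo_subset_Ico_self hs)).mono Ioo_subset_Ico_self).sub_const c
      exact (hy.mul (hasDerivAt_exp s).hasDerivWithinAt).congr_deriv (by ring)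
    · rw [interior_Ico] at hs
      have hs' := hineq s (Ioo_subset_Ico_self hs)
      exact mul_nonpos_of_nonpos_of_nonneg (by linarith) (exp_pos s).le
  have hle : (y t - c) * exp t ≤ (y a - c) * exp a := hanti ⟨le_rfl, ht.1.trans_lt ht.2⟩ ht ht.1
  rw [exp_sub, mul_div_assoc', ← sub_le_iff_le_add', le_div_iff₀ (exp_pos t)]
  exact hle

theorem le_max_of_deriv_add_le
    (hdiff : ∀ t ∈ Ico a b, HasDerivWithinAt y (y' t) (Ico a b) t)
    (hineq : ∀ t ∈ Ico a b, y' t + y t ≤ c) {t : ℝ} (ht : t ∈ Ico a b) :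
    y t ≤ max c (y a) := by
  have hbound := le_add_sub_mul_exp_of_deriv_add_le hdiff hineq ht
  have he0 : 0 ≤ exp (a - t) := (exp_pos _).le
  have he1 : exp (a - t) ≤ 1 := exp_le_one_iff.mpr (by linarith [ht.1])
  nlinarith [mul_nonneg (sub_nonneg.mpr he1) (sub_nonneg.mpr (le_max_left c (y a))),
    mul_nonneg he0 (sub_nonneg.mpr (le_max_right c (y a)))]

theorem le_of_tendsto_of_deriv_add_le (hab : a < b)
    (hdiff : ∀ t ∈ Ico a b, HasDerivWithinAt y (y' t) (Ico a b) t)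
    (hineq : ∀ t ∈ Ico a b, y' t + y t ≤ c) {ℓ : ℝ} (hℓ : Tendsto y (𝓝[<] b) (𝓝 ℓ)) :
    ℓ ≤ c + (y a - c) * exp (a - b) := by
  have hcont : Continuous fun t => c + (y a - c) * exp (a - t) := by fun_prop
  refine le_of_tendsto_of_tendsto hℓ ((hcont.tendsto b).mono_left nhdsWithin_le_nhds) ?_
  filter_upwards [Ioo_mem_nhdsLT hab] with t ht
  exact le_add_sub_mul_exp_of_deriv_add_le hdiff hineq (Ioo_subset_Ico_self ht)

end DifferentialInequality

theorem le_max_div_one_sub_of_le_mul_add {u : ℕ → ℝ} {γ d : ℝ} (hγ0 : 0 ≤ γ) (hγ1 : γ < 1)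
    (hu : ∀ n, u (n + 1) ≤ γ * u n + d) (n : ℕ) : u n ≤ max (u 0) (d / (1 - γ)) := by
  induction n with
  | zero => exact le_max_left _ _
  | succ n ih =>
    have hd : d ≤ (1 - γ) * max (u 0) (d / (1 - γ)) :=
      (div_le_iff₀' (by linarith)).mp (le_max_right _ _)
    calc u (n + 1) ≤ γ * u n + d := hu n
      _ ≤ γ * max (u 0) (d / (1 - γ)) + (1 - γ) * max (u 0) (d / (1 - γ)) := by gcongr
      _ = max (u 0) (d / (1 - γ)) := by ring

theorem mem_Ico_floor_div_mul {t h : ℝ} (ht : 0 ≤ t) (hh : 0 < h) :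
    t ∈ Ico (⌊t / h⌋₊ * h) ((⌊t / h⌋₊ + 1) * h) :=
  ⟨(le_div_iff₀ hh).mp (Nat.floor_le (div_nonneg ht hh.le)),
    (div_lt_iff₀ hh).mp (Nat.lt_floor_add_one _)⟩

theorem stmt9_general (h F K η : ℝ) (hh : 0 < h) (hK : 0 ≤ K)
    (y y' : ℝ → ℝ)
    (hdiff : ∀ n : ℕ, ∀ t ∈ Set.Ico (n * h) ((n + 1) * h),
      HasDerivWithinAt y (y' t) (Set.Ico (n * h) ((n + 1) * h)) t)
    (hineq : ∀ n : ℕ, ∀ t ∈ Set.Ico (n * h) ((n + 1) * h), y' t + y t ≤ F ^ 2)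
    (hjump : ∀ n : ℕ, ∃ ℓ : ℝ,
      Filter.Tendsto y (nhdsWithin ((n + 1) * h) (Set.Iio ((n + 1) * h))) (nhds ℓ) ∧
      y ((n + 1) * h) ≤ ℓ + K)
    (h0 : y 0 ≤ η ^ 2 + K) :
    ∀ t ≥ (0 : ℝ), y t ≤
      (η ^ 2 + (K * Real.exp (-h) + F ^ 2 * (1 - Real.exp (-h))) + K + F ^ 2)
        / (1 - Real.exp (-h)) := by
  set γ := exp (-h)
  have hγ0 : 0 < γ := exp_pos _
  have hγ1 : γ < 1 := exp_lt_one_iff.mpr (neg_neg_of_pos hh)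
  have hnode (n : ℕ) : y (n * h) ≤ max (y 0) ((F ^ 2 * (1 - γ) + K) / (1 - γ)) := by
    have hrec (m : ℕ) : y ((m + 1 : ℕ) * h) ≤ γ * y (m * h) + (F ^ 2 * (1 - γ) + K) := by
      obtain ⟨ℓ, hℓ, hℓK⟩ := hjump m
      have hlim := le_of_tendsto_of_deriv_add_le (by linarith) (hdiff m) (hineq m) hℓ
      rw [show (m : ℝ) * h - (m + 1) * h = -h by ring] at hlim
      push_cast
      linarith
    simpa only [Nat.cast_zero, zero_mul] using
      le_max_div_one_sub_of_le_mul_add (u := fun m : ℕ => y (m * h)) hγ0.le hγ1 hrec n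
  intro t ht
  have hyt := le_max_of_deriv_add_le (hdiff _) (hineq _) (mem_Ico_floor_div_mul ht hh)
  have hη2 := sq_nonneg η
  have hF2 := sq_nonneg F
  refine hyt.trans (max_le ?_ ((hnode _).trans (max_le ?_ ?_)))
  · rw [le_div_iff₀ (by linarith)]
    nlinarith
  · rw [le_div_iff₀ (by linarith)]
    nlinarith
  · apply div_le_div_of_nonneg_right _ (by linarith)
    nlinarith

theorem stmt9 (h F K η : ℝ) (hh : 0 < h) (hF : 0 ≤ F) (hK : 0 ≤ K) (hη : 0 ≤ η)
    (y y' : ℝ → ℝ) (hynn : ∀ t, 0 ≤ y t)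
    (hdiff : ∀ n : ℕ, ∀ t ∈ Set.Ico (n * h) ((n + 1) * h),
      HasDerivWithinAt y (y' t) (Set.Ico (n * h) ((n + 1) * h)) t)
    (hineq : ∀ n : ℕ, ∀ t ∈ Set.Ico (n * h) ((n + 1) * h), y' t + y t ≤ F ^ 2)
    (hjump : ∀ n : ℕ, ∃ ℓ : ℝ,
      Filter.Tendsto y (nhdsWithin ((n + 1) * h) (Set.Iio ((n + 1) * h))) (nhds ℓ) ∧
      y ((n + 1) * h) ≤ ℓ + K)
    (h0 : y 0 ≤ η ^ 2 + K) :
    ∀ t ≥ (0 : ℝ), y t ≤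
      (η ^ 2 + (K * Real.exp (-h) + F ^ 2 * (1 - Real.exp (-h))) + K + F ^ 2)
        / (1 - Real.exp (-h)) :=
  stmt9_general h F K η hh hK y y' hdiff hineq hjump h0
end

section
/- For the Lorenz bilinear form B and vectors U = (X, Y, Z), δ = (δ_X, δ_Y, δ_Z) in ℝ³, one has 2(B(U, δ), δ) = δ_X(Zδ_Y - Yδ_Z), and hence |2(B(U,δ),δ)| ≤ |U| |Pδ| |δ| ≤ (K/2)|Pδ|² + (1/2)|δ|² whenever |U|² ≤ K, where P = diag(1,0,0). -/
/-- Euclidean dot product on ℝ³ (as ℝ × ℝ × ℝ). -/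
def dot3 (U V : ℝ × ℝ × ℝ) : ℝ := U.1 * V.1 + U.2.1 * V.2.1 + U.2.2 * V.2.2

/-- Euclidean norm on ℝ³. -/
noncomputable def norm3 (U : ℝ × ℝ × ℝ) : ℝ := Real.sqrt (dot3 U U)

/-- The Lorenz bilinear form B. -/
noncomputable def lorenzB (U V : ℝ × ℝ × ℝ) : ℝ × ℝ × ℝ :=
  (0, (U.1 * V.2.2 + U.2.2 * V.1) / 2, -(U.1 * V.2.1 + U.2.1 * V.1) / 2)

/-- Projection onto the first coordinate. -/
def projP (U : ℝ × ℝ × ℝ) : ℝ × ℝ × ℝ := (U.1, 0, 0)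

lemma norm3_nonneg (V : ℝ × ℝ × ℝ) : 0 ≤ norm3 V := Real.sqrt_nonneg _

lemma norm3_sq (V : ℝ × ℝ × ℝ) : norm3 V ^ 2 = dot3 V V := by
  unfold norm3
  exact Real.sq_sqrt (by unfold dot3; nlinarith [sq_nonneg V.1, sq_nonneg V.2.1, sq_nonneg V.2.2])

theorem stmt12 (K : ℝ) (hK : 0 < K) (U δ : ℝ × ℝ × ℝ) (hU : norm3 U ^ 2 ≤ K) :
    2 * dot3 (lorenzB U δ) δ = δ.1 * (U.2.2 * δ.2.1 - U.2.1 * δ.2.2) ∧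
    |2 * dot3 (lorenzB U δ) δ| ≤ norm3 U * norm3 (projP δ) * norm3 δ ∧
    norm3 U * norm3 (projP δ) * norm3 δ ≤
      K / 2 * norm3 (projP δ) ^ 2 + 1 / 2 * norm3 δ ^ 2 := by
  have ha := norm3_nonneg U
  have hp := norm3_nonneg (projP δ)
  have hd := norm3_nonneg δ
  have ha2 := norm3_sq U
  have hp2 : norm3 (projP δ) ^ 2 = δ.1 * δ.1 := by rw [norm3_sq]; simp [projP, dot3]
  have hd2 := norm3_sq δ
  unfold dot3 at ha2 hd2
  refine ⟨?_, ?_, ?_⟩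
  · unfold dot3 lorenzB; ring
  · have h1 : 2 * dot3 (lorenzB U δ) δ = δ.1 * (U.2.2 * δ.2.1 - U.2.1 * δ.2.2) := by
      unfold dot3 lorenzB; ring
    rw [h1]
    have key : (U.2.2 * δ.2.1 - U.2.1 * δ.2.2) ^ 2
        ≤ (U.2.1 ^ 2 + U.2.2 ^ 2) * (δ.2.1 ^ 2 + δ.2.2 ^ 2) := by
      nlinarith [sq_nonneg (U.2.1 * δ.2.1 + U.2.2 * δ.2.2)]
    have h2 : U.2.1 ^ 2 + U.2.2 ^ 2 ≤ norm3 U ^ 2 := by nlinarith [sq_nonneg U.1]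
    have h3 : δ.2.1 ^ 2 + δ.2.2 ^ 2 ≤ norm3 δ ^ 2 := by nlinarith [sq_nonneg δ.1]
    have h4 : (U.2.1 ^ 2 + U.2.2 ^ 2) * (δ.2.1 ^ 2 + δ.2.2 ^ 2)
        ≤ norm3 U ^ 2 * norm3 δ ^ 2 := by
      apply mul_le_mul h2 h3 (by positivity) (by positivity)
    have h5 : (U.2.2 * δ.2.1 - U.2.1 * δ.2.2) ^ 2 ≤ norm3 U ^ 2 * norm3 δ ^ 2 :=
      key.trans h4
    have hsq : (δ.1 * (U.2.2 * δ.2.1 - U.2.1 * δ.2.2)) ^ 2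
        ≤ (norm3 U * norm3 (projP δ) * norm3 δ) ^ 2 := by
      have h6 := mul_le_mul_of_nonneg_left h5 (sq_nonneg δ.1)
      calc (δ.1 * (U.2.2 * δ.2.1 - U.2.1 * δ.2.2)) ^ 2
          = δ.1 ^ 2 * (U.2.2 * δ.2.1 - U.2.1 * δ.2.2) ^ 2 := by ring
        _ ≤ δ.1 ^ 2 * (norm3 U ^ 2 * norm3 δ ^ 2) := h6
        _ = (norm3 U * norm3 (projP δ) * norm3 δ) ^ 2 := by
          linear_combination (-(norm3 U ^ 2 * norm3 δ ^ 2)) * hp2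
    calc |δ.1 * (U.2.2 * δ.2.1 - U.2.1 * δ.2.2)|
        = Real.sqrt ((δ.1 * (U.2.2 * δ.2.1 - U.2.1 * δ.2.2)) ^ 2) := (Real.sqrt_sq_eq_abs _).symm
      _ ≤ Real.sqrt ((norm3 U * norm3 (projP δ) * norm3 δ) ^ 2) := Real.sqrt_le_sqrt hsq
      _ = norm3 U * norm3 (projP δ) * norm3 δ :=
          Real.sqrt_sq (by positivity)
  · nlinarith [sq_nonneg (norm3 U * norm3 (projP δ) - norm3 δ), sq_nonneg (norm3 (projP δ)),
      mul_nonneg (mul_nonneg ha hp) hd]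
end
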